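/- For real μ > 0, the Fourier transform of s ↦ (cosh s)^{-μ} over R is ξ ↦ (2^{μ-1}/√(2π)) · Γ((μ+iξ)/2) Γ((μ-iξ)/2) / Γ(μ), i.e. (1/√(2π)) ∫_R (cosh s)^{-μ} e^{-isξ} ds = (2^{μ-1}/√(2π)) B((μ+iξ)/2, (μ-iξ)/2) · Γ(μ)/Γ(μ) expressed via the Beta function B. -/

import Mathlib

open MeasureTheory Complex Set

/-!
Substitute `s = ½ log (x / (1 - x))`, a diffeomorphism from `(0, 1)` onto `ℝ` with
`ds = dx / (2x(1 - x))`. Then `cosh s = 1 / (2 √(x(1 - x)))` and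
`e^{-isξ} = x^{-iξ/2} (1 - x)^{iξ/2}`, so the Fourier integral of `(cosh s)^{-μ}` becomes
`2^{μ-1} ∫₀¹ x^{(μ-iξ)/2-1} (1 - x)^{(μ+iξ)/2-1} dx = 2^{μ-1} B((μ-iξ)/2, (μ+iξ)/2)`,
and Euler's identity `B(u, v) = Γ(u) Γ(v) / Γ(u + v)` finishes the computation.
-/

noncomputable def halfLogit (x : ℝ) : ℝ := (Real.log x - Real.log (1 - x)) / 2

lemma hasDerivAt_halfLogit {x : ℝ} (hx : x ∈ Ioo (0 : ℝ) 1) :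
    HasDerivAt halfLogit (1 / (2 * x * (1 - x))) x := by
  obtain ⟨hx0, hx1⟩ := hx
  have hlog_one_sub : HasDerivAt (fun y : ℝ => Real.log (1 - y)) ((1 - x)⁻¹ * (-1)) x :=
    (Real.hasDerivAt_log (by linarith)).comp x ((hasDerivAt_id x).const_sub 1)
  refine (((Real.hasDerivAt_log hx0.ne').sub hlog_one_sub).div_const 2).congr_deriv ?_
  field_simp [show 1 - x ≠ 0 by linarith]
  ring

lemma strictMonoOn_halfLogit : StrictMonoOn halfLogit (Ioo (0 : ℝ) 1) := by
  intro x hx y hy hxy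
  have hlog : Real.log x < Real.log y := Real.log_lt_log hx.1 hxy
  have hlog_one_sub : Real.log (1 - y) < Real.log (1 - x) :=
    Real.log_lt_log (by linarith [hy.2]) (by linarith)
  unfold halfLogit
  linarith

lemma halfLogit_image_Ioo : halfLogit '' Ioo (0 : ℝ) 1 = univ := by
  refine eq_univ_of_forall fun s => ⟨1 / (1 + Real.exp (-2 * s)), ⟨by positivity, ?_⟩, ?_⟩
  · rw [div_lt_one (by positivity)]
    linarith [Real.exp_pos (-2 * s)]
  · have hpos : 0 < 1 + Real.exp (-2 * s) := by positivity
    have hone_sub : 1 - 1 / (1 + Real.exp (-2 * s)) =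
        Real.exp (-2 * s) / (1 + Real.exp (-2 * s)) := by
      field_simp
      ring
    rw [halfLogit, hone_sub, Real.log_div one_ne_zero hpos.ne',
      Real.log_div (Real.exp_pos _).ne' hpos.ne', Real.log_exp, Real.log_one]
    ring

lemma cosh_halfLogit {x : ℝ} (hx : x ∈ Ioo (0 : ℝ) 1) :
    Real.cosh (halfLogit x) = 1 / (2 * Real.sqrt (x * (1 - x))) := by
  obtain ⟨hx0, hx1⟩ := hx
  have h1x : 0 < 1 - x := by linarith
  have hexp : Real.exp (halfLogit x) = Real.sqrt x / Real.sqrt (1 - x) := by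
    rw [halfLogit, Real.exp_half, Real.exp_sub, Real.exp_log hx0, Real.exp_log h1x,
      Real.sqrt_div hx0.le]
  have hsx := Real.sqrt_pos.mpr hx0
  have hs1x := Real.sqrt_pos.mpr h1x
  rw [Real.cosh_eq, Real.exp_neg, hexp, inv_div, Real.sqrt_mul hx0.le]
  field_simp
  rw [Real.sq_sqrt hx0.le, Real.sq_sqrt h1x.le]
  ring

lemma cosh_halfLogit_rpow_neg (μ : ℝ) {x : ℝ} (hx : x ∈ Ioo (0 : ℝ) 1) :
    Real.cosh (halfLogit x) ^ (-μ) = 2 ^ μ * (x ^ (μ / 2) * (1 - x) ^ (μ / 2)) := by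
  obtain ⟨hx0, hx1⟩ := hx
  have h1x : 0 < 1 - x := by linarith
  rw [cosh_halfLogit ⟨hx0, hx1⟩, one_div, Real.inv_rpow (by positivity),
    Real.rpow_neg (by positivity), inv_inv, Real.mul_rpow zero_le_two (Real.sqrt_nonneg _),
    Real.sqrt_eq_rpow, ← Real.rpow_mul (by positivity), Real.mul_rpow hx0.le h1x.le,
    one_div_mul_eq_div]

lemma exp_neg_I_mul_halfLogit_mul (ξ : ℝ) {x : ℝ} (hx : x ∈ Ioo (0 : ℝ) 1) :
    Complex.exp (-I * (halfLogit x : ℂ) * ξ) =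
      (x : ℂ) ^ (-(I * ξ / 2)) * ((1 - x : ℝ) : ℂ) ^ (I * ξ / 2) := by
  obtain ⟨hx0, hx1⟩ := hx
  have h1x : 0 < 1 - x := by linarith
  rw [cpow_def_of_ne_zero (ofReal_ne_zero.mpr hx0.ne'),
    cpow_def_of_ne_zero (ofReal_ne_zero.mpr h1x.ne'), ← Complex.exp_add,
    ← ofReal_log hx0.le, ← ofReal_log h1x.le, halfLogit]
  push_cast
  ring_nf

lemma ofReal_rpow_mul_cpow {x : ℝ} (hx : 0 < x) (a : ℝ) (z : ℂ) :
    ((x ^ a : ℝ) : ℂ) * (x : ℂ) ^ z = (x : ℂ) ^ ((a : ℂ) + z) := by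
  rw [cpow_add _ _ (ofReal_ne_zero.mpr hx.ne'), ofReal_cpow hx.le]

lemma abs_deriv_smul_integrand_halfLogit (μ ξ : ℝ) {x : ℝ} (hx : x ∈ Ioo (0 : ℝ) 1) :
    |1 / (2 * x * (1 - x))| • (((Real.cosh (halfLogit x) ^ (-μ) : ℝ) : ℂ) *
        Complex.exp (-I * (halfLogit x : ℂ) * ξ)) =
      ((2 ^ (μ - 1) : ℝ) : ℂ) *
        ((x : ℂ) ^ ((μ - I * ξ) / 2 - 1) * (1 - (x : ℂ)) ^ ((μ + I * ξ) / 2 - 1)) := by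
  obtain ⟨hx0, hx1⟩ := hx
  have h1x : 0 < 1 - x := by linarith
  have hreal : |1 / (2 * x * (1 - x))| * Real.cosh (halfLogit x) ^ (-μ) =
      2 ^ (μ - 1) * (x ^ (μ / 2 - 1) * (1 - x) ^ (μ / 2 - 1)) := by
    rw [abs_of_pos (by positivity), cosh_halfLogit_rpow_neg μ ⟨hx0, hx1⟩,
      Real.rpow_sub two_pos, Real.rpow_sub hx0, Real.rpow_sub h1x, Real.rpow_one, Real.rpow_one,
      Real.rpow_one]
    field_simp
  rw [exp_neg_I_mul_halfLogit_mul ξ ⟨hx0, hx1⟩, real_smul, ← mul_assoc, ← ofReal_mul, hreal,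
    show (1 : ℂ) - x = ((1 - x : ℝ) : ℂ) by push_cast; ring]
  rw [show ((μ : ℂ) - I * ξ) / 2 - 1 = ((μ / 2 - 1 : ℝ) : ℂ) + -(I * ξ / 2) by push_cast; ring,
    show ((μ : ℂ) + I * ξ) / 2 - 1 = ((μ / 2 - 1 : ℝ) : ℂ) + I * ξ / 2 by push_cast; ring,
    ← ofReal_rpow_mul_cpow hx0, ← ofReal_rpow_mul_cpow h1x]
  push_cast
  ring

theorem integral_cosh_rpow_neg_mul_exp (μ ξ : ℝ) :
    ∫ s : ℝ, ((Real.cosh s ^ (-μ) : ℝ) : ℂ) * Complex.exp (-I * s * ξ) =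
      ((2 ^ (μ - 1) : ℝ) : ℂ) * betaIntegral ((μ - I * ξ) / 2) ((μ + I * ξ) / 2) := by
  rw [← setIntegral_univ, ← halfLogit_image_Ioo,
    integral_image_eq_integral_abs_deriv_smul measurableSet_Ioo
      (fun x hx => (hasDerivAt_halfLogit hx).hasDerivWithinAt) strictMonoOn_halfLogit.injOn,
    setIntegral_congr_fun measurableSet_Ioo
      (fun x hx => abs_deriv_smul_integrand_halfLogit μ ξ hx),
    integral_const_mul, betaIntegral, intervalIntegral.integral_of_le zero_le_one,
    integral_Ioc_eq_integral_Ioo]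

theorem betaIntegral_eq_Gamma_mul_Gamma_div {u v : ℂ} (hu : 0 < u.re) (hv : 0 < v.re) :
    betaIntegral u v = Gamma u * Gamma v / Gamma (u + v) := by
  rw [Gamma_mul_Gamma_eq_betaIntegral hu hv,
    mul_div_cancel_left₀ _ (Gamma_ne_zero_of_re_pos (by rw [add_re]; positivity))]

/-- For `μ > 0`, the Fourier transform of `s ↦ (cosh s)^{-μ}` (with convention
`f̂(ξ) = (1/√(2π)) ∫ f(s) e^{-isξ} ds`) equals
`(2^{μ-1}/√(2π)) Γ((μ+iξ)/2) Γ((μ-iξ)/2) / Γ(μ)`. -/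
theorem statement15 (μ : ℝ) (hμ : 0 < μ) (ξ : ℝ) :
    ((1 / Real.sqrt (2 * Real.pi) : ℝ) : ℂ) *
        ∫ s : ℝ, ((Real.cosh s ^ (-μ) : ℝ) : ℂ) *
          Complex.exp (-Complex.I * (s : ℂ) * (ξ : ℂ)) =
      (((2 : ℝ) ^ (μ - 1) / Real.sqrt (2 * Real.pi) : ℝ) : ℂ) *
        (Complex.Gamma (((μ : ℂ) + Complex.I * (ξ : ℂ)) / 2) *
          Complex.Gamma (((μ : ℂ) - Complex.I * (ξ : ℂ)) / 2)) /
        Complex.Gamma (μ : ℂ) := by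
  have hre : ∀ t : ℝ, 0 < (((μ : ℂ) + I * t) / 2).re := fun t => by simp [hμ]
  have hsum : ((μ : ℂ) + I * ξ) / 2 + ((μ : ℂ) + I * (-ξ : ℝ)) / 2 = μ := by push_cast; ring
  rw [integral_cosh_rpow_neg_mul_exp, betaIntegral_symm,
    show ((μ : ℂ) - I * ξ) / 2 = ((μ : ℂ) + I * (-ξ : ℝ)) / 2 by push_cast; ring,
    betaIntegral_eq_Gamma_mul_Gamma_div (hre _) (hre _), hsum]
  push_cast
  ring
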